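/- arXiv:2509.22337 — 4 statements merged into one kernel-verified Lean document; each statement's English description precedes it below -/
import Mathlib

section
/- Let E be a finite set with a strict partial order ≺ and N : E → Set E an arbitrary neighborhood function. Suppose a list e₁, …, e_N is a topological linearization of (E, ≺) (i.e., e_i ≺ e_j implies i < j), and the list is greedily partitioned into consecutive blocks s₁, …, s_k such that a new block is started at e_i exactly when some element e already in the current block satisfies e ∈ N(e_i) and e ≺ e_i. Then for every block s_j, every e ∈ s_j, and every e' ∈ N(e) with e' ≺ e, we have e' ∈ s₁ ∪ … ∪ s_{j−1}. -/
theorem stmt_1_general {E : Type*} (prec : E → E → Prop)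
    (Nbr : E → Set E) (N : ℕ) (e : Fin N → E)
    (hbij : Function.Bijective e)
    (htopo : ∀ i j : Fin N, prec (e i) (e j) → i < j)
    (blk : Fin N → ℕ) (hmono : Monotone blk)
    (hgreedy : ∀ i j : Fin N, j < i → blk j = blk i →
      ¬ (e j ∈ Nbr (e i) ∧ prec (e j) (e i))) :
    ∀ i : Fin N, ∀ e' ∈ Nbr (e i), prec e' (e i) →
      ∃ j : Fin N, e j = e' ∧ blk j < blk i := by
  intro i e' hNbr hprec
  obtain ⟨j, rfl⟩ := hbij.surjective e'
  have hji : j < i := htopo j i hprec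
  exact ⟨j, rfl, (hmono hji.le).lt_of_ne fun hblk => hgreedy i j hji hblk ⟨hNbr, hprec⟩⟩

/-- Correctness of the dependency-analysis algorithm: for a topological linearization
of a finite strict partial order, greedily partitioned into consecutive blocks (a new
block starts exactly when a within-block dependency would be created), every dependency
of an element lies in a strictly earlier block. -/
theorem stmt_1 {E : Type*} [Fintype E] (prec : E → E → Prop)
    (hirr : ∀ e, ¬ prec e e)
    (htrans : ∀ a b c, prec a b → prec b c → prec a c)
    (Nbr : E → Set E) (N : ℕ) (e : Fin N → E)
    (hbij : Function.Bijective e)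
    (htopo : ∀ i j : Fin N, prec (e i) (e j) → i < j)
    (blk : Fin N → ℕ) (hmono : Monotone blk)
    (hgreedy : ∀ i j : Fin N, j < i → blk j = blk i →
      ¬ (e j ∈ Nbr (e i) ∧ prec (e j) (e i))) :
    ∀ i : Fin N, ∀ e' ∈ Nbr (e i), prec e' (e i) →
      ∃ j : Fin N, e j = e' ∧ blk j < blk i :=
  stmt_1_general prec Nbr N e hbij htopo blk hmono hgreedy
end

section
/- Let μ₀, μ₁, …, μ_n : {0,1} → ℝ≥0 be messages and p₁, p₂ ∈ [0,1]. Define the AND factor f(x₀, x₁, …, x_n) to equal p₁ if all x_i = 1 for i ≥ 1 and x₀ = 1; 1−p₁ if all x_i = 1 and x₀ = 0; p₂ if some x_i = 0 (i ≥ 1) and x₀ = 1; and 1−p₂ if some x_i = 0 and x₀ = 0. Then the sum-product message to the head variable satisfies ∑_{x₁,…,x_n} f(1, x₁,…,x_n) ∏_{i=1}^n μ_i(x_i) = p₂ ∏_{i=1}^n (μ_i(0) + μ_i(1)) + (p₁ − p₂) ∏_{i=1}^n μ_i(1). -/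
open Finset

section AndFactor

variable {ι R : Type*} [Fintype ι] [DecidableEq ι]

theorem sum_prod_apply_bool [CommSemiring R] (μ : ι → Bool → R) :
    ∑ x : ι → Bool, ∏ i, μ i (x i) = ∏ i, (μ i false + μ i true) := by
  simp only [← Fintype.prod_sum, Fintype.sum_bool, add_comm]

theorem sum_ite_forall_true_mul_prod [CommRing R] (a b : R) (μ : ι → Bool → R) :
    ∑ x : ι → Bool, (if ∀ i, x i = true then a else b) * ∏ i, μ i (x i) =
      b * ∏ i, (μ i false + μ i true) + (a - b) * ∏ i, μ i true := by
  have hsplit : ∀ x : ι → Bool, (if ∀ i, x i = true then a else b) =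
      b + if x = fun _ => true then a - b else 0 := by
    intro x
    simp only [funext_iff]
    split_ifs <;> ring
  simp only [hsplit, add_mul, sum_add_distrib, ← mul_sum, sum_prod_apply_bool, ite_mul,
    zero_mul, sum_ite_eq']
  simp

end AndFactor

open Finset in
theorem stmt_3_general (n : ℕ) (p₁ p₂ : ℝ)
    (μ : Fin n → Bool → ℝ)
    (f : Bool → (Fin n → Bool) → ℝ)
    (hf : ∀ x₀ x, f x₀ x =
      if (∀ i, x i = true) then (if x₀ then p₁ else 1 - p₁)
      else (if x₀ then p₂ else 1 - p₂)) :
    ∑ x : Fin n → Bool, f true x * ∏ i, μ i (x i) =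
      p₂ * ∏ i, (μ i false + μ i true) + (p₁ - p₂) * ∏ i, μ i true := by
  simp only [hf, if_true]
  -- `convert` only reconciles the two `Decidable` instances of `∀ i, x i = true`.
  convert sum_ite_forall_true_mul_prod p₁ p₂ μ

open Finset in
/-- Closed form of the sum-product message from an AND factor to its head variable at value 1. -/
theorem stmt_3 (n : ℕ) (hn : 1 ≤ n) (p₁ p₂ : ℝ)
    (hp₁ : 0 ≤ p₁ ∧ p₁ ≤ 1) (hp₂ : 0 ≤ p₂ ∧ p₂ ≤ 1)
    (μ : Fin n → Bool → ℝ) (hμ : ∀ i b, 0 ≤ μ i b)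
    (f : Bool → (Fin n → Bool) → ℝ)
    (hf : ∀ x₀ x, f x₀ x =
      if (∀ i, x i = true) then (if x₀ then p₁ else 1 - p₁)
      else (if x₀ then p₂ else 1 - p₂)) :
    ∑ x : Fin n → Bool, f true x * ∏ i, μ i (x i) =
      p₂ * ∏ i, (μ i false + μ i true) + (p₁ - p₂) * ∏ i, μ i true :=
  stmt_3_general n p₁ p₂ μ f hf
end

section
/- With the AND factor f and messages μ₀, μ₁, …, μ_n : {0,1} → ℝ≥0, for any fixed body index j ∈ {1,…,n}, the message to variable v_j at value 1 satisfies ∑_{x₀} ∑_{x_i, i≠j, i≥1} f(x₀, x₁,…,x_{j−1},1,x_{j+1},…,x_n) ∏_{i≠j, i≥0} μ_i(x_i) = ((1−p₂)μ₀(0) + p₂ μ₀(1)) ∏_{i≥1, i≠j} (μ_i(0)+μ_i(1)) + (p₂−p₁)(μ₀(0) − μ₀(1)) ∏_{i≥1, i≠j} μ_i(1). -/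
section

open Finset

variable {ι R : Type*} [Fintype ι] [DecidableEq ι]

theorem sum_filter_apply_eq_true_prod_erase [CommSemiring R] (j : ι) (g : ι → Bool → R) :
    ∑ x ∈ univ.filter (fun x : ι → Bool => x j = true), ∏ i ∈ univ.erase j, g i (x i) =
      ∏ i ∈ univ.erase j, (g i false + g i true) := by
  -- Put a neutral factor at `j`, whose sum over `{true}` is `1`, and expand the product of sums.
  set t : ι → Finset Bool := fun i => if i = j then {true} else univ
  set h : ι → Bool → R := fun i b => if i = j then 1 else g i b
  have hfilter : univ.filter (fun x : ι → Bool => x j = true) = Fintype.piFinset t := by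
    ext x
    simp only [mem_filter, mem_univ, true_and, Fintype.mem_piFinset, t]
    refine ⟨fun hx i => ?_, fun hx => by simpa using hx j⟩
    split_ifs with hi
    · simp [hi, hx]
    · exact mem_univ _
  have hprod : ∀ x : ι → Bool, ∏ i ∈ univ.erase j, g i (x i) = ∏ i, h i (x i) := fun x => by
    rw [← mul_prod_erase univ _ (mem_univ j)]
    simp +contextual [h, prod_congr rfl]
  calc ∑ x ∈ univ.filter (fun x : ι → Bool => x j = true), ∏ i ∈ univ.erase j, g i (x i)
      = ∏ i, ∑ b ∈ t i, h i b := by simp only [hfilter, hprod, prod_univ_sum]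
    _ = ∏ i ∈ univ.erase j, (g i false + g i true) := by
      rw [← mul_prod_erase univ _ (mem_univ j)]
      simp +contextual [t, h, prod_congr rfl, add_comm]

theorem sum_filter_apply_eq_true_ite_forall_mul_prod_erase [CommRing R] (j : ι)
    (g : ι → Bool → R) (c₁ c₂ : R) :
    ∑ x ∈ univ.filter (fun x : ι → Bool => x j = true),
        (if ∀ i, x i = true then c₁ else c₂) * ∏ i ∈ univ.erase j, g i (x i) =
      c₂ * ∏ i ∈ univ.erase j, (g i false + g i true) +
        (c₁ - c₂) * ∏ i ∈ univ.erase j, g i true := by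
  -- The coefficient is `c₂` everywhere, plus `c₁ - c₂` at the single point `fun _ => true`.
  have hsplit : ∀ x : ι → Bool, (if ∀ i, x i = true then c₁ else c₂) * ∏ i ∈ univ.erase j, g i (x i) =
      c₂ * ∏ i ∈ univ.erase j, g i (x i) +
        if (fun _ => true) = x then (c₁ - c₂) * ∏ i ∈ univ.erase j, g i (x i) else 0 := fun x => by
    by_cases hx : ∀ i, x i = true
    · rw [if_pos hx, if_pos (funext hx).symm]
      ring
    · have hne : (fun _ => true) ≠ x := fun h => hx (by simp [← h])
      simp [hx, hne]
  simp only [hsplit, sum_add_distrib, ← mul_sum, sum_filter_apply_eq_true_prod_erase, sum_ite_eq,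
    mem_filter, mem_univ, true_and, if_true]
end

open Finset in
theorem stmt_5_general (n : ℕ) (j : Fin n) (p₁ p₂ : ℝ)
    (μ₀ : Bool → ℝ) (μ : Fin n → Bool → ℝ)
    (f : Bool → (Fin n → Bool) → ℝ)
    (hf : ∀ x₀ x, f x₀ x =
      if (∀ i, x i = true) then (if x₀ then p₁ else 1 - p₁)
      else (if x₀ then p₂ else 1 - p₂)) :
    ∑ x₀ : Bool, ∑ x ∈ Finset.univ.filter (fun x : Fin n → Bool => x j = true),
        f x₀ x * (μ₀ x₀ * ∏ i ∈ Finset.univ.erase j, μ i (x i)) =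
      ((1 - p₂) * μ₀ false + p₂ * μ₀ true) *
          ∏ i ∈ Finset.univ.erase j, (μ i false + μ i true) +
        (p₂ - p₁) * (μ₀ false - μ₀ true) * ∏ i ∈ Finset.univ.erase j, μ i true := by
  have hmessage : ∀ x₀ : Bool,
      ∑ x ∈ univ.filter (fun x : Fin n → Bool => x j = true),
          f x₀ x * (μ₀ x₀ * ∏ i ∈ univ.erase j, μ i (x i)) =
        μ₀ x₀ * ((if x₀ then p₂ else 1 - p₂) * ∏ i ∈ univ.erase j, (μ i false + μ i true) +
          ((if x₀ then p₁ else 1 - p₁) - (if x₀ then p₂ else 1 - p₂)) *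
            ∏ i ∈ univ.erase j, μ i true) := fun x₀ => by
    rw [← sum_filter_apply_eq_true_ite_forall_mul_prod_erase, mul_sum]
    -- `congr` reconciles the two `Decidable (∀ i, x i = true)` instances (for `Fin n` and generic `ι`).
    exact sum_congr rfl fun x _ => by rw [hf, mul_left_comm]; congr
  rw [Fintype.sum_bool, hmessage, hmessage]
  simp only [if_true, Bool.false_eq_true, if_false]
  ring

open Finset in
/-- Closed form of the sum-product message from an AND factor to a body variable v_j at value 1. -/
theorem stmt_5 (n : ℕ) (hn : 1 ≤ n) (j : Fin n) (p₁ p₂ : ℝ)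
    (hp₁ : 0 ≤ p₁ ∧ p₁ ≤ 1) (hp₂ : 0 ≤ p₂ ∧ p₂ ≤ 1)
    (μ₀ : Bool → ℝ) (μ : Fin n → Bool → ℝ)
    (hμ₀ : ∀ b, 0 ≤ μ₀ b) (hμ : ∀ i b, 0 ≤ μ i b)
    (f : Bool → (Fin n → Bool) → ℝ)
    (hf : ∀ x₀ x, f x₀ x =
      if (∀ i, x i = true) then (if x₀ then p₁ else 1 - p₁)
      else (if x₀ then p₂ else 1 - p₂)) :
    ∑ x₀ : Bool, ∑ x ∈ Finset.univ.filter (fun x : Fin n → Bool => x j = true),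
        f x₀ x * (μ₀ x₀ * ∏ i ∈ Finset.univ.erase j, μ i (x i)) =
      ((1 - p₂) * μ₀ false + p₂ * μ₀ true) *
          ∏ i ∈ Finset.univ.erase j, (μ i false + μ i true) +
        (p₂ - p₁) * (μ₀ false - μ₀ true) * ∏ i ∈ Finset.univ.erase j, μ i true :=
  stmt_5_general n j p₁ p₂ μ₀ μ f hf
end

section
/- With the AND factor f and messages μ₀, μ₁, …, μ_n : {0,1} → ℝ≥0, for any fixed body index j, the message to variable v_j at value 0 satisfies ∑_{x₀} ∑_{x_i, i≠j, i≥1} f(x₀, x₁,…,x_{j−1},0,x_{j+1},…,x_n) ∏_{i≠j, i≥0} μ_i(x_i) = ((1−p₂)μ₀(0) + p₂ μ₀(1)) ∏_{i≥1, i≠j} (μ_i(0)+μ_i(1)). -/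
open Finset

theorem sum_filter_apply_eq_prod_erase_sum {ι α R : Type*} [Fintype ι] [DecidableEq ι]
    [Fintype α] [DecidableEq α] [CommSemiring R] (j : ι) (a : α) (g : ι → α → R) :
    ∑ x ∈ univ.filter (fun x : ι → α => x j = a), ∏ i ∈ univ.erase j, g i (x i) =
      ∏ i ∈ univ.erase j, ∑ b, g i b := by
  -- Replace the factor at `j` by the indicator of `a` and expand the full product of sums.
  set g' : ι → α → R := fun i b => if i = j then (if b = a then 1 else 0) else g i b
  have hexpand : ∀ x : ι → α, ∏ i, g' i (x i) =
      if x j = a then ∏ i ∈ univ.erase j, g i (x i) else 0 := by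
    intro x
    rw [← prod_erase_mul _ _ (mem_univ j), prod_congr rfl fun i hi => if_neg (ne_of_mem_erase hi)]
    simp only [g', if_pos, mul_ite, mul_one, mul_zero]
  have hsum : ∏ i, ∑ b, g' i b = ∏ i ∈ univ.erase j, ∑ b, g i b := by
    rw [← prod_erase_mul _ _ (mem_univ j),
      prod_congr rfl fun i hi => sum_congr rfl fun b _ => if_neg (ne_of_mem_erase hi)]
    simp [g']
  rw [← hsum, Fintype.prod_sum, sum_filter]
  exact sum_congr rfl fun x _ => (hexpand x).symm

theorem stmt_6_general (n : ℕ) (j : Fin n) (p₁ p₂ : ℝ)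
    (μ₀ : Bool → ℝ) (μ : Fin n → Bool → ℝ)
    (f : Bool → (Fin n → Bool) → ℝ)
    (hf : ∀ x₀ x, f x₀ x =
      if (∀ i, x i = true) then (if x₀ then p₁ else 1 - p₁)
      else (if x₀ then p₂ else 1 - p₂)) :
    ∑ x₀ : Bool, ∑ x ∈ Finset.univ.filter (fun x : Fin n → Bool => x j = false),
        f x₀ x * (μ₀ x₀ * ∏ i ∈ Finset.univ.erase j, μ i (x i)) =
      ((1 - p₂) * μ₀ false + p₂ * μ₀ true) *
        ∏ i ∈ Finset.univ.erase j, (μ i false + μ i true) := by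
  have hf_off : ∀ x₀ (x : Fin n → Bool), x j = false → f x₀ x = if x₀ then p₂ else 1 - p₂ :=
    fun x₀ x hx => by rw [hf, if_neg fun hall => by simp [hall j] at hx]
  calc _ = ∑ x₀ : Bool, (if x₀ then p₂ else 1 - p₂) * μ₀ x₀ *
        ∑ x ∈ univ.filter (fun x : Fin n → Bool => x j = false),
          ∏ i ∈ univ.erase j, μ i (x i) := by
        refine sum_congr rfl fun x₀ _ => ?_
        rw [mul_sum]
        refine sum_congr rfl fun x hx => ?_
        rw [hf_off x₀ x (mem_filter.mp hx).2, mul_assoc]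
    _ = _ := by
        simp only [sum_filter_apply_eq_prod_erase_sum, Fintype.sum_bool, add_comm (μ _ true)]
        simp only [if_true, Bool.false_eq_true, if_false]
        ring

open Finset in
/-- Closed form of the sum-product message from an AND factor to a body variable v_j at value 0. -/
theorem stmt_6 (n : ℕ) (hn : 1 ≤ n) (j : Fin n) (p₁ p₂ : ℝ)
    (hp₁ : 0 ≤ p₁ ∧ p₁ ≤ 1) (hp₂ : 0 ≤ p₂ ∧ p₂ ≤ 1)
    (μ₀ : Bool → ℝ) (μ : Fin n → Bool → ℝ)
    (hμ₀ : ∀ b, 0 ≤ μ₀ b) (hμ : ∀ i b, 0 ≤ μ i b)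
    (f : Bool → (Fin n → Bool) → ℝ)
    (hf : ∀ x₀ x, f x₀ x =
      if (∀ i, x i = true) then (if x₀ then p₁ else 1 - p₁)
      else (if x₀ then p₂ else 1 - p₂)) :
    ∑ x₀ : Bool, ∑ x ∈ Finset.univ.filter (fun x : Fin n → Bool => x j = false),
        f x₀ x * (μ₀ x₀ * ∏ i ∈ Finset.univ.erase j, μ i (x i)) =
      ((1 - p₂) * μ₀ false + p₂ * μ₀ true) *
        ∏ i ∈ Finset.univ.erase j, (μ i false + μ i true) :=
  stmt_6_general n j p₁ p₂ μ₀ μ f hf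
end
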